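/- arXiv:1706.06829 — 3 statements merged into one kernel-verified Lean document; each statement's English description precedes it below -/
import Mathlib

section
/- Suppose every independent set S in a graph G_c on n vertices spans at most 3n edges in another graph G_t on the same vertex set. If T ⊆ V admits a proper coloring in G_c[T] with χ colors and U₀ is a set of isolated vertices of G_c disjoint from T, then the number of edges of G_t between T and U₀ is at most 3χn. -/
open SimpleGraph Set

/-- If every independent set of `Gc` spans at most `3n` edges in `Gt`, `T` admits a proper
coloring of `Gc[T]` with `χ` colors, and `U₀` is a set of isolated vertices of `Gc` disjoint
from `T`, then the number of `Gt`-edges between `T` and `U₀` is at most `3 * χ * n`. -/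
theorem edges_between_cover_and_isolated_le
    {V : Type*} [Fintype V] (Gc Gt : SimpleGraph V) (n χ : ℕ)
    (hn : Fintype.card V = n)
    (hindep : ∀ S : Set V, (S.Pairwise fun u v => ¬ Gc.Adj u v) →
      {e ∈ Gt.edgeSet | ∀ v ∈ e, v ∈ S}.ncard ≤ 3 * n)
    (T U₀ : Set V) (hTU : Disjoint T U₀)
    (hiso : ∀ u ∈ U₀, ∀ v : V, ¬ Gc.Adj u v)
    (c : V → Fin χ)
    (hc : ∀ u ∈ T, ∀ v ∈ T, Gc.Adj u v → c u ≠ c v) :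
    {e ∈ Gt.edgeSet | ∃ u ∈ T, ∃ v ∈ U₀, e = s(u, v)}.ncard ≤ 3 * χ * n := by
  classical
  set F : Fin χ → Set (Sym2 V) :=
    fun i => {e ∈ Gt.edgeSet | ∀ v ∈ e, v ∈ ({w ∈ T | c w = i} ∪ U₀)} with hF
  have hsub : {e ∈ Gt.edgeSet | ∃ u ∈ T, ∃ v ∈ U₀, e = s(u, v)} ⊆ ⋃ i : Fin χ, F i := by
    rintro e ⟨he, u, hu, v, hv, rfl⟩
    refine Set.mem_iUnion.2 ⟨c u, he, ?_⟩
    intro w hw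
    rw [Sym2.mem_iff] at hw
    rcases hw with rfl | rfl
    · exact Or.inl ⟨hu, rfl⟩
    · exact Or.inr hv
  have hFi : ∀ i : Fin χ, (F i).ncard ≤ 3 * n := by
    intro i
    apply hindep
    intro x hx y hy hxy hadj
    rcases hx with hx | hx
    · rcases hy with hy | hy
      · exact hc x hx.1 y hy.1 hadj (hx.2.trans hy.2.symm)
      · exact hiso y hy x hadj.symm
    · exact hiso x hx y hadj
  have h1 : {e ∈ Gt.edgeSet | ∃ u ∈ T, ∃ v ∈ U₀, e = s(u, v)}.ncard ≤
      (⋃ i : Fin χ, F i).ncard := Set.ncard_le_ncard hsub (Set.toFinite _)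
  have h2 : (⋃ i : Fin χ, F i).ncard ≤ ∑ i : Fin χ, (F i).ncard := by
    have h3 : (⋃ i : Fin χ, F i).toFinset ⊆ Finset.univ.biUnion fun i => (F i).toFinset := by
      intro e he
      rw [Set.mem_toFinset, Set.mem_iUnion] at he
      obtain ⟨i, hi⟩ := he
      exact Finset.mem_biUnion.2 ⟨i, Finset.mem_univ i, Set.mem_toFinset.2 hi⟩
    calc (⋃ i : Fin χ, F i).ncard = (⋃ i : Fin χ, F i).toFinset.card := by
          rw [Set.ncard_eq_toFinset_card']
      _ ≤ (Finset.univ.biUnion fun i => (F i).toFinset).card := Finset.card_le_card h3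
      _ ≤ ∑ i : Fin χ, (F i).toFinset.card := Finset.card_biUnion_le
      _ = ∑ i : Fin χ, (F i).ncard := by simp [Set.ncard_eq_toFinset_card']
  calc {e ∈ Gt.edgeSet | ∃ u ∈ T, ∃ v ∈ U₀, e = s(u, v)}.ncard
      ≤ ∑ i : Fin χ, (F i).ncard := h1.trans h2
    _ ≤ ∑ _i : Fin χ, 3 * n := Finset.sum_le_sum fun i _ => hFi i
    _ = 3 * χ * n := by simp [Finset.sum_const, mul_comm, mul_assoc, mul_left_comm]
end

section
/- There exist families of n curves in the plane in general position with exactly t touching pairs and at most 2t²/n² crossing pairs, for any even n and t a multiple of n with n ≤ t < n²/4. Abstract combinatorial version: there exist graphs G_t and G_c on a common n-element vertex set such that G_t has t edges, G_c has at most (2t/n choose 2) ≤ 2t²/n² edges, every edge of G_c joins two vertices of a fixed set B of size 2t/n, and every independent set of G_c spans at most 3n edges of G_t is consistent. -/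
open SimpleGraph Set

/-- Abstract combinatorial version of the lower-bound construction: for even `n`, `t` a
multiple of `n` with `n ≤ t < n²/4`, there are graphs `Gt` and `Gc` on a common `n`-element
vertex set such that `Gt` has `t` edges, `Gc` has at most `C(2t/n, 2) ≤ 2t²/n²` edges, every
edge of `Gc` joins two vertices of a fixed set `B` of size `2t/n`, and every independent set
of `Gc` spans at most `3n` edges of `Gt`. -/
theorem construction_exists (n t : ℕ) (hn : Even n) (hdvd : n ∣ t)
    (hnt : n ≤ t) (ht : 4 * t < n ^ 2) :
    ∃ (Gt Gc : SimpleGraph (Fin n)) (B : Finset (Fin n)),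
      B.card = 2 * t / n ∧
      Gt.edgeSet.ncard = t ∧
      Gc.edgeSet.ncard ≤ Nat.choose (2 * t / n) 2 ∧
      Nat.choose (2 * t / n) 2 ≤ 2 * t ^ 2 / n ^ 2 ∧
      (∀ e ∈ Gc.edgeSet, ∀ v ∈ e, v ∈ B) ∧
      (∀ S : Set (Fin n), (S.Pairwise fun u v => ¬ Gc.Adj u v) →
        {e ∈ Gt.edgeSet | ∀ v ∈ e, v ∈ S}.ncard ≤ 3 * n) := by
  classical
  obtain ⟨m, rfl⟩ := hdvd
  rcases Nat.eq_zero_or_pos n with hn0 | hn0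
  · subst hn0; simp at ht
  obtain ⟨h, hh⟩ := hn
  set k := 2 * m with hk
  have hm1 : 1 ≤ m := by
    rcases Nat.eq_zero_or_pos m with rfl | hm
    · simp at hnt; omega
    · exact hm
  have h4m : 4 * m < n := by nlinarith
  have hkh : k < h := by omega
  have hhn : h < n := by omega
  have hkn : k ≤ n := by omega
  have hdiv : 2 * (n * m) / n = k := by
    rw [show 2 * (n * m) = n * (2 * m) by ring, Nat.mul_div_cancel_left _ hn0]
  set f : Fin k ↪ Fin n := Fin.castLEEmb hkn with hf
  set Gt : SimpleGraph (Fin n) :=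
    SimpleGraph.fromRel (fun u v => u.val < k ∧ h ≤ v.val) with hGt
  set Gc : SimpleGraph (Fin n) := SimpleGraph.map f ⊤ with hGc
  set B : Finset (Fin n) := Finset.univ.filter (fun v => v.val < k) with hB
  set T : Finset (Fin n) := Finset.univ.filter (fun v => h ≤ v.val) with hT
  have hBcard : B.card = k := by
    have : B = Finset.Iio (⟨k, by omega⟩ : Fin n) := by
      ext v; simp [hB, Fin.lt_def]
    rw [this, Fin.card_Iio]
  have hTcard : T.card = h := by
    have : T = Finset.Ici (⟨h, hhn⟩ : Fin n) := by
      ext v; simp [hT, Fin.le_def]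
    rw [this, Fin.card_Ici]
    show n - h = h
    omega
  -- adjacency in Gc
  have hGcAdj : ∀ u v : Fin n, Gc.Adj u v ↔ u ≠ v ∧ u.val < k ∧ v.val < k := by
    intro u v
    simp only [hGc, SimpleGraph.map_adj, top_adj]
    constructor
    · rintro ⟨a, b, hab, rfl, rfl⟩
      refine ⟨fun hc => hab ?_, a.isLt, b.isLt⟩
      · exact Fin.castLE_injective hkn hc
    · rintro ⟨hne, hu, hv⟩
      exact ⟨⟨u.val, hu⟩, ⟨v.val, hv⟩, by
        simp [Fin.ext_iff]; exact fun hc => hne (Fin.ext hc), rfl, rfl⟩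
  -- edge count of Gt
  have hGtAdj : ∀ u v : Fin n, Gt.Adj u v ↔
      ((u.val < k ∧ h ≤ v.val) ∨ (v.val < k ∧ h ≤ u.val)) := by
    intro u v
    simp only [hGt, fromRel_adj]
    constructor
    · rintro ⟨-, hr⟩; exact hr
    · rintro hr
      refine ⟨?_, hr⟩
      rintro rfl
      omega
  have hGtedge : Gt.edgeFinset = (B ×ˢ T).image (fun p => s(p.1, p.2)) := by
    ext e
    refine Sym2.inductionOn e fun u v => ?_
    simp only [mem_edgeFinset, mem_edgeSet, hGtAdj, Finset.mem_image, Finset.mem_product,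
      hB, hT, Finset.mem_filter, Finset.mem_univ, true_and, Prod.exists, Sym2.eq_iff]
    constructor
    · rintro (⟨h1, h2⟩ | ⟨h1, h2⟩)
      · exact ⟨u, v, ⟨h1, h2⟩, Or.inl ⟨rfl, rfl⟩⟩
      · exact ⟨v, u, ⟨h1, h2⟩, Or.inr ⟨rfl, rfl⟩⟩
    · rintro ⟨a, b, ⟨h1, h2⟩, (⟨rfl, rfl⟩ | ⟨rfl, rfl⟩)⟩
      · exact Or.inl ⟨h1, h2⟩
      · exact Or.inr ⟨h1, h2⟩
  have hGtcard : Gt.edgeSet.ncard = n * m := by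
    rw [← SimpleGraph.coe_edgeFinset, Set.ncard_coe_finset, hGtedge,
      Finset.card_image_of_injOn, Finset.card_product, hBcard, hTcard]
    · rw [show k * h = m * (h + h) by ring, ← hh]; ring
    · rintro ⟨a, b⟩ hab ⟨c, d⟩ hcd hs
      simp only [Finset.mem_coe, Finset.mem_product, hB, hT, Finset.mem_filter, Finset.mem_univ,
        true_and] at hab hcd
      simp only [Sym2.eq_iff] at hs
      rcases hs with ⟨rfl, rfl⟩ | ⟨rfl, rfl⟩
      · rfl
      · exfalso; omega
  -- edge count of Gc
  have hGccard : Gc.edgeSet.ncard ≤ Nat.choose k 2 := by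
    have hsub : Gc.edgeSet ⊆ Sym2.map (Fin.castLE hkn) '' (⊤ : SimpleGraph (Fin k)).edgeSet := by
      intro e he
      induction e using Sym2.inductionOn with
      | _ u v =>
        rw [mem_edgeSet, hGcAdj] at he
        obtain ⟨hne, hu, hv⟩ := he
        refine ⟨s(⟨u.val, hu⟩, ⟨v.val, hv⟩), ?_, ?_⟩
        · rw [mem_edgeSet, top_adj]
          intro hc
          exact hne (by simpa [Fin.ext_iff] using congrArg Fin.val hc)
        · simp [Fin.ext_iff]
    calc Gc.edgeSet.ncard ≤ (Sym2.map (Fin.castLE hkn) '' (⊤ : SimpleGraph (Fin k)).edgeSet).ncard :=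
          Set.ncard_le_ncard hsub ((Set.toFinite _).image _)
      _ ≤ (⊤ : SimpleGraph (Fin k)).edgeSet.ncard := Set.ncard_image_le (Set.toFinite _)
      _ = Nat.choose k 2 := by
          rw [← SimpleGraph.coe_edgeFinset, Set.ncard_coe_finset,
            SimpleGraph.card_edgeFinset_top_eq_card_choose_two, Fintype.card_fin]
  -- arithmetic bound
  have harith : Nat.choose k 2 ≤ 2 * (n * m) ^ 2 / n ^ 2 := by
    have hr : 2 * (n * m) ^ 2 / n ^ 2 = 2 * m ^ 2 := by
      rw [show 2 * (n * m) ^ 2 = n ^ 2 * (2 * m ^ 2) by ring,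
        Nat.mul_div_cancel_left _ (by positivity)]
    rw [hr, Nat.choose_two_right, hk,
      show 2 * m * (2 * m - 1) = 2 * (m * (2 * m - 1)) by ring,
      Nat.mul_div_cancel_left _ (by norm_num)]
    calc m * (2 * m - 1) ≤ m * (2 * m) := Nat.mul_le_mul_left _ (Nat.sub_le _ _)
      _ = 2 * m ^ 2 := by ring
  refine ⟨Gt, Gc, B, by rw [hdiv, hBcard], hGtcard, by rw [hdiv]; exact hGccard,
    by rw [hdiv]; exact harith, ?_, ?_⟩
  · -- edges of Gc in B
    intro e he v hv
    induction e using Sym2.inductionOn with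
    | _ a b =>
      rw [mem_edgeSet, hGcAdj] at he
      rw [Sym2.mem_iff] at hv
      simp only [hB, Finset.mem_filter, Finset.mem_univ, true_and]
      rcases hv with rfl | rfl
      · exact he.2.1
      · exact he.2.2
  · -- independent sets
    intro S hS
    by_cases hex : ∃ u ∈ S, u.val < k
    · obtain ⟨u, huS, huk⟩ := hex
      have hsub : {e ∈ Gt.edgeSet | ∀ v ∈ e, v ∈ S} ⊆ Set.range (fun v : Fin n => s(u, v)) := by
        intro e he
        obtain ⟨he1, he2⟩ := he
        induction e using Sym2.inductionOn with
        | _ a b =>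
          rw [mem_edgeSet, hGtAdj] at he1
          have haS : a ∈ S := he2 a (by simp)
          have hbS : b ∈ S := he2 b (by simp)
          have key : ∀ w : Fin n, w ∈ S → w.val < k → w = u := by
            intro w hwS hwk
            by_contra hne
            exact hS hwS huS hne ((hGcAdj w u).mpr ⟨hne, hwk, huk⟩)
          rcases he1 with ⟨h1, h2⟩ | ⟨h1, h2⟩
          · have := key a haS h1
            subst this
            exact ⟨b, rfl⟩
          · have := key b hbS h1
            subst this
            exact ⟨a, Sym2.eq_swap⟩
      calc {e ∈ Gt.edgeSet | ∀ v ∈ e, v ∈ S}.ncard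
          ≤ (Set.range (fun v : Fin n => s(u, v))).ncard :=
            Set.ncard_le_ncard hsub (Set.toFinite _)
        _ = ((fun v : Fin n => s(u, v)) '' Set.univ).ncard := by rw [Set.image_univ]
        _ ≤ (Set.univ : Set (Fin n)).ncard := Set.ncard_image_le (Set.toFinite _)
        _ = n := by rw [Set.ncard_univ, Nat.card_eq_fintype_card, Fintype.card_fin]
        _ ≤ 3 * n := by omega
    · push_neg at hex
      have : {e ∈ Gt.edgeSet | ∀ v ∈ e, v ∈ S} = ∅ := by
        ext e
        simp only [Set.mem_setOf_eq, Set.mem_empty_iff_false, iff_false, not_and]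
        intro he1 he2
        induction e using Sym2.inductionOn with
        | _ a b =>
          rw [mem_edgeSet, hGtAdj] at he1
          rcases he1 with ⟨h1, h2⟩ | ⟨h1, h2⟩
          · exact absurd (hex a (he2 a (by simp))) (by omega)
          · exact absurd (hex b (he2 b (by simp))) (by omega)
      rw [this, Set.ncard_empty]
      omega
end

section
/- Let G_c and G_t be graphs on the same vertex set V, |V| = n ≥ 3, such that every G_c-independent set S spans at most 3|S| ≤ 3n edges in G_t (the 'abstract touching condition'). Suppose G_t has t ≥ 10n edges and the conclusion c ≥ 10⁻⁵ t²/n² is assumed inductively for all smaller vertex sets with the analogous hypotheses, where c = |E(G_c)|. Then if additionally t ≤ 10 n^{3/2}, one has |E(G_c)| ≥ 10⁻⁴ t²/n². (Case A of the paper, abstracted to graphs satisfying the planarity-derived independent-set edge bound.) -/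
/-!
Colour the vertices uniformly at random with `k ≈ t / (30 n)` colours and keep, in each colour
class, the vertices having no `Gc`-neighbour of their own colour. A kept class is
`Gc`-independent, so it spans at most three times its size of `Gt`-edges, and at most `3n`
`Gt`-edges are kept altogether. A `Gt`-edge `uv` that is not a `Gc`-edge is kept as soon as
`u, v` get the same colour and no `Gc`-neighbour of `u` or `v` gets it, which happens with
probability at least `1/k - (deg u + deg v)/k²`. Summing over the edges gives
`t k ≤ 3 n k² + c k + 2 n c`, and with this choice of `k` that forces `c ≥ 10⁻⁴ t²/n²`.
Probabilities are replaced throughout by numbers of colourings `V → Fin k`.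
-/

open SimpleGraph Finset Fintype

section Colorings
variable {V : Type*} [Fintype V] [DecidableEq V] (α : Type*) [Fintype α] [DecidableEq α]

def monochromaticOn (A : Finset V) : Finset (V → α) :=
  {f | ∃ i, ∀ a ∈ A, f a = i}

variable {α}

theorem card_filter_forall_mem_eq_mul_pow (A : Finset V) (i : α) :
    #{f : V → α | ∀ a ∈ A, f a = i} * card α ^ #A = card α ^ card V := by
  have hpi : ({f : V → α | ∀ a ∈ A, f a = i} : Finset (V → α)) =
      piFinset fun a => if a ∈ A then {i} else univ := by
    ext f
    simp only [mem_filter, mem_univ, true_and, mem_piFinset]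
    refine forall_congr' fun a => ?_
    split_ifs <;> simp_all
  have hAc : ∀ a ∈ Aᶜ, #(if a ∈ A then {i} else univ) = card α := fun a ha => by
    rw [if_neg (mem_compl.1 ha), card_univ]
  have hA : ∀ a ∈ A, #(if a ∈ A then {i} else univ) = 1 := fun a ha => by
    rw [if_pos ha, card_singleton]
  rw [hpi, card_piFinset, ← prod_compl_mul_prod A, prod_congr rfl hAc, prod_congr rfl hA,
    prod_const, prod_const_one, mul_one, ← pow_add, card_compl_add_card]

theorem card_monochromaticOn_mul_pow {A : Finset V} (hA : A.Nonempty) :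
    #(monochromaticOn α A) * card α ^ #A = card α ^ card V * card α := by
  obtain ⟨a₀, ha₀⟩ := hA
  have hunion : monochromaticOn α A = univ.biUnion fun i => {f | ∀ a ∈ A, f a = i} := by
    ext f
    simp [monochromaticOn]
  have hdisj : ((univ : Finset α) : Set α).PairwiseDisjoint
      fun i => ({f : V → α | ∀ a ∈ A, f a = i} : Finset (V → α)) := by
    intro i _ j _ hij
    simp only [Function.onFun, Finset.disjoint_left, mem_filter, mem_univ, true_and]
    exact fun f hi hj => hij ((hi a₀ ha₀).symm.trans (hj a₀ ha₀))
  rw [hunion, card_biUnion hdisj, sum_mul]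
  simp only [card_filter_forall_mem_eq_mul_pow, sum_const, card_univ, smul_eq_mul]
  exact mul_comm _ _

end Colorings

theorem Finset.card_filter_exists_le {β ι : Type*} [Fintype ι] [DecidableEq β] (s : Finset β)
    (p : β → ι → Prop) [∀ b i, Decidable (p b i)] :
    #{b ∈ s | ∃ i, p b i} ≤ ∑ i, #{b ∈ s | p b i} := by
  calc #{b ∈ s | ∃ i, p b i} = #(univ.biUnion fun i => {b ∈ s | p b i}) := by
        congr 1; ext; simp
    _ ≤ _ := card_biUnion_le

namespace SimpleGraph
variable {V α : Type*} [Fintype V]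

theorem sum_edgeFinset_sum_degree_le [DecidableEq V] (G H : SimpleGraph V) [DecidableRel G.Adj]
    [DecidableRel H.Adj] :
    ∑ e ∈ H.edgeFinset, ∑ x with x ∈ e, G.degree x ≤ 2 * card V * #G.edgeFinset := by
  calc ∑ e ∈ H.edgeFinset, ∑ x with x ∈ e, G.degree x
      = ∑ x, H.degree x * G.degree x := by
        simp_rw [sum_filter]
        rw [sum_comm]
        refine sum_congr rfl fun x _ => ?_
        rw [← sum_filter, sum_const, smul_eq_mul, ← incidenceFinset_eq_filter,
          card_incidenceFinset_eq_degree]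
    _ ≤ ∑ x, card V * G.degree x :=
        sum_le_sum fun x _ => Nat.mul_le_mul_right _ (H.degree_lt_card_verts x).le
    _ = 2 * card V * #G.edgeFinset := by
        rw [← mul_sum, sum_degrees_eq_twice_card_edges]
        ring

section IsolatedColorClass
variable [DecidableEq α] (G : SimpleGraph V) [DecidableRel G.Adj]

def isolatedColorClass (f : V → α) (i : α) : Finset V :=
  {v | f v = i ∧ ∀ w, G.Adj v w → f w ≠ i}

theorem isIndepSet_isolatedColorClass (f : V → α) (i : α) :
    G.IsIndepSet (G.isolatedColorClass f i : Set V) := by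
  intro u hu v hv _ huv
  simp only [isolatedColorClass, coe_filter, mem_univ, true_and, Set.mem_ofPred_eq] at hu hv
  exact hu.2 v huv hv.1

variable [DecidableEq V] [Fintype α]

theorem sum_card_isolatedColorClass_le (f : V → α) :
    ∑ i, #(G.isolatedColorClass f i) ≤ card V := by
  have hdisj : ((univ : Finset α) : Set α).PairwiseDisjoint (G.isolatedColorClass f) := by
    intro i _ j _ hij
    simp only [Function.onFun, Finset.disjoint_left, isolatedColorClass, mem_filter, mem_univ,
      true_and]
    exact fun v hi hj => hij (hi.1.symm.trans hj.1)
  rw [← card_biUnion hdisj]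
  exact card_le_univ _

variable (α)

def keepingColorings (e : Sym2 V) : Finset (V → α) :=
  {f | ∃ i, ∀ x ∈ e, x ∈ G.isolatedColorClass f i}

variable {α} {G} {H : SimpleGraph V} [DecidableRel H.Adj] {a : ℕ}

theorem sum_card_keepingColorings_le
    (hH : ∀ S : Set V, G.IsIndepSet S →
      {e ∈ H.edgeSet | ∀ v ∈ e, v ∈ S}.ncard ≤ a * S.ncard) :
    ∑ e ∈ H.edgeFinset, #(G.keepingColorings α e) ≤ a * card V * card α ^ card V := by
  have hclass : ∀ (f : V → α) i,
      #{e ∈ H.edgeFinset | ∀ v ∈ e, v ∈ G.isolatedColorClass f i}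
        ≤ a * #(G.isolatedColorClass f i) := fun f i => by
    have hset : {e ∈ H.edgeSet | ∀ v ∈ e, v ∈ (G.isolatedColorClass f i : Set V)} =
        ↑({e ∈ H.edgeFinset | ∀ v ∈ e, v ∈ G.isolatedColorClass f i} : Finset _) := by
      ext; simp
    have h := hH _ (G.isIndepSet_isolatedColorClass f i)
    rwa [hset, Set.ncard_coe_finset, Set.ncard_coe_finset] at h
  calc ∑ e ∈ H.edgeFinset, #(G.keepingColorings α e)
      = ∑ f : V → α,
          #{e ∈ H.edgeFinset | ∃ i, ∀ v ∈ e, v ∈ G.isolatedColorClass f i} := by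
        simp only [keepingColorings, card_filter]
        exact sum_comm
    _ ≤ ∑ f : V → α, ∑ i,
          #{e ∈ H.edgeFinset | ∀ v ∈ e, v ∈ G.isolatedColorClass f i} :=
        sum_le_sum fun f _ => card_filter_exists_le _ _
    _ ≤ ∑ f : V → α, ∑ i, a * #(G.isolatedColorClass f i) :=
        sum_le_sum fun f _ => sum_le_sum fun i _ => hclass f i
    _ ≤ ∑ _f : V → α, a * card V :=
        sum_le_sum fun f _ => by
          rw [← mul_sum]
          exact Nat.mul_le_mul_left a (G.sum_card_isolatedColorClass_le f)
    _ = a * card V * card α ^ card V := by simp [mul_comm]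

/-- The bound `P(s(u, v) is kept) ≥ 1/k - (deg u + deg v)/k²`, multiplied by `k ^ (n + 3)`,
where `k = card α` and `n = card V`. -/
theorem pow_mul_le_card_keepingColorings {u v : V} (huv : u ≠ v) (hG : ¬ G.Adj u v) :
    card α ^ card V * card α ^ 2 ≤ #(G.keepingColorings α s(u, v)) * card α ^ 3
      + (∑ x with x ∈ s(u, v), G.degree x) * (card α ^ card V * card α) := by
  set B : Finset V := ({x | x ∈ s(u, v)} : Finset V).biUnion fun x => G.neighborFinset x
  have hcover : monochromaticOn α {u, v} ⊆
      G.keepingColorings α s(u, v) ∪ B.biUnion fun w => monochromaticOn α {u, v, w} := by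
    intro f hf
    simp only [monochromaticOn, mem_filter, mem_univ, true_and, mem_insert, mem_singleton,
      forall_eq_or_imp, forall_eq] at hf
    obtain ⟨i, hu, hv⟩ := hf
    rw [mem_union, or_iff_not_imp_left]
    intro hbad
    simp only [keepingColorings, mem_filter, mem_univ, true_and, not_exists, not_forall] at hbad
    obtain ⟨x, hx, hxi⟩ := hbad i
    have hfx : f x = i := by rcases Sym2.mem_iff.1 hx with rfl | rfl <;> assumption
    simp only [isolatedColorClass, mem_filter, mem_univ, true_and, not_and, not_forall,
      not_not] at hxi
    obtain ⟨w, hxw, hfw⟩ := hxi hfx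
    refine mem_biUnion.2 ⟨w, mem_biUnion.2 ⟨x, by simpa using hx, by simpa using hxw⟩, ?_⟩
    simp [monochromaticOn, hu, hv, hfw]
  have hcard3 : ∀ w ∈ B, #({u, v, w} : Finset V) = 3 := by
    intro w hw
    simp only [B, mem_biUnion, mem_filter, mem_univ, true_and, mem_neighborFinset] at hw
    obtain ⟨x, hx, hxw⟩ := hw
    rcases Sym2.mem_iff.1 hx with rfl | rfl
    · exact card_eq_three.2 ⟨x, v, w, huv, hxw.ne, fun h => hG (h ▸ hxw), rfl⟩
    · exact card_eq_three.2 ⟨u, x, w, huv, fun h => hG (h ▸ hxw.symm), hxw.ne, rfl⟩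
  have hB : #B ≤ ∑ x with x ∈ s(u, v), G.degree x := by
    refine card_biUnion_le.trans_eq ?_
    simp only [card_neighborFinset_eq_degree]
  have hpair := card_monochromaticOn_mul_pow (α := α) (insert_nonempty u {v})
  rw [card_pair huv] at hpair
  calc card α ^ card V * card α ^ 2
      = #(monochromaticOn α {u, v}) * card α ^ 2 * card α := by rw [hpair]; ring
    _ ≤ (#(G.keepingColorings α s(u, v)) + ∑ w ∈ B, #(monochromaticOn α {u, v, w}))
          * card α ^ 2 * card α := by
        gcongr
        exact (card_le_card hcover).trans <|
          (card_union_le _ _).trans (Nat.add_le_add_left card_biUnion_le _)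
    _ = #(G.keepingColorings α s(u, v)) * card α ^ 3
          + ∑ w ∈ B, #(monochromaticOn α {u, v, w}) * card α ^ 3 := by
        rw [mul_assoc, ← pow_succ, add_mul, sum_mul]
    _ = #(G.keepingColorings α s(u, v)) * card α ^ 3 + #B * (card α ^ card V * card α) := by
        rw [Finset.sum_congr rfl fun w hw => by
          rw [← hcard3 w hw, card_monochromaticOn_mul_pow (insert_nonempty _ _)]]
        rw [sum_const, smul_eq_mul]
    _ ≤ _ := by gcongr

theorem card_edgeFinset_mul_le_of_isIndepSet
    (hH : ∀ S : Set V, G.IsIndepSet S →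
      {e ∈ H.edgeSet | ∀ v ∈ e, v ∈ S}.ncard ≤ a * S.ncard) :
    #H.edgeFinset * card α ≤
      a * card V * card α ^ 2 + #G.edgeFinset * card α + 2 * card V * #G.edgeFinset := by
  set k := card α
  set n := card V
  let D := H.edgeFinset \ G.edgeFinset
  have hedge : ∀ e ∈ D, k ^ n * k ^ 2 ≤
      #(G.keepingColorings α e) * k ^ 3 + (∑ x with x ∈ e, G.degree x) * (k ^ n * k) := by
    intro e he
    induction e using Sym2.ind with | _ u v => ?_
    rw [mem_sdiff, mem_edgeFinset, mem_edgeFinset, mem_edgeSet, mem_edgeSet] at he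
    exact pow_mul_le_card_keepingColorings he.1.ne he.2
  have hsum :
      #D * (k ^ n * k ^ 2) ≤ a * n * k ^ n * k ^ 3 + 2 * n * #G.edgeFinset * (k ^ n * k) :=
    calc #D * (k ^ n * k ^ 2) = ∑ _e ∈ D, k ^ n * k ^ 2 := by rw [sum_const, smul_eq_mul]
      _ ≤ ∑ e ∈ D,
            (#(G.keepingColorings α e) * k ^ 3 + (∑ x with x ∈ e, G.degree x) * (k ^ n * k)) :=
        sum_le_sum hedge
      _ = (∑ e ∈ D, #(G.keepingColorings α e)) * k ^ 3
          + (∑ e ∈ D, ∑ x with x ∈ e, G.degree x) * (k ^ n * k) := by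
        rw [sum_add_distrib, sum_mul, sum_mul]
      _ ≤ (∑ e ∈ H.edgeFinset, #(G.keepingColorings α e)) * k ^ 3
          + (∑ e ∈ H.edgeFinset, ∑ x with x ∈ e, G.degree x) * (k ^ n * k) := by
        gcongr <;> exact sdiff_subset
      _ ≤ a * n * k ^ n * k ^ 3 + 2 * n * #G.edgeFinset * (k ^ n * k) := by
        gcongr
        · exact sum_card_keepingColorings_le hH
        · exact sum_edgeFinset_sum_degree_le G H
  have hD : #D * k ≤ a * n * k ^ 2 + 2 * n * #G.edgeFinset := by
    rcases k.eq_zero_or_pos with hk | hk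
    · simp [hk]
    refine Nat.le_of_mul_le_mul_right (c := k ^ n * k) ?_ (Nat.mul_pos (pow_pos hk _) hk)
    calc #D * k * (k ^ n * k) = #D * (k ^ n * k ^ 2) := by ring
      _ ≤ _ := hsum
      _ = _ := by ring
  calc #H.edgeFinset * k ≤ (#D + #G.edgeFinset) * k := by
        gcongr; exact card_le_card_sdiff_add_card
    _ ≤ _ := by rw [add_mul]; linarith

end IsolatedColorClass

end SimpleGraph

theorem sq_div_sq_le_of_forall_mul_le {n t c : ℕ} (hn : 0 < n) (htlow : 10 * n ≤ t)
    (htn : t ≤ n ^ 2) (hkey : ∀ k : ℕ, t * k ≤ 3 * n * k ^ 2 + c * k + 2 * n * c) :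
    1 / 10 ^ 4 * ((t : ℝ) ^ 2 / (n : ℝ) ^ 2) ≤ c := by
  set k := t / (30 * n) + 1
  have hk_lt : t < 30 * n * k := Nat.lt_mul_div_succ t (by positivity)
  have hk_le : 30 * n * k ≤ 4 * t := by
    have := Nat.div_mul_le_self t (30 * n)
    simp only [k, mul_add, mul_one]
    nlinarith
  have hN : (0 : ℝ) < n := by exact_mod_cast hn
  have hT : (0 : ℝ) < t := by exact_mod_cast (by omega : 0 < t)
  have hK : (0 : ℝ) < k := by positivity
  have hk_ltR : (t : ℝ) < 30 * n * k := by exact_mod_cast hk_lt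
  have hk_leR : 30 * (n : ℝ) * k ≤ 4 * t := by exact_mod_cast hk_le
  have htnR : (t : ℝ) ≤ n ^ 2 := by exact_mod_cast htn
  have hkeyR : (t : ℝ) * k ≤ 3 * n * k ^ 2 + c * k + 2 * n * c := by exact_mod_cast hkey k
  by_contra! hc
  have hc : 10 ^ 4 * (n : ℝ) ^ 2 * c < t ^ 2 := by
    rw [div_mul_eq_mul_div, one_mul, div_div, lt_div_iff₀ (by positivity)] at hc
    linarith
  have hc_small : 10 ^ 4 * (c : ℝ) < t := by nlinarith
  have hc_small' : 10 ^ 4 * (n : ℝ) ^ 2 * c < 30 * n * k * t := by nlinarith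
  linarith [mul_le_mul_of_nonneg_left hkeyR (by positivity : (0 : ℝ) ≤ 30 * n),
    mul_le_mul_of_nonneg_left hk_leR (by positivity : (0 : ℝ) ≤ 3 * n * k),
    mul_lt_mul_of_pos_right hc_small (mul_pos hN hK), mul_pos (mul_pos hN hT) hK]

theorem caseA_general (n : ℕ) (hn : 3 ≤ n) (Gc Gt : SimpleGraph (Fin n))
    (hindep : ∀ S : Set (Fin n), (S.Pairwise fun u v => ¬ Gc.Adj u v) →
      {e ∈ Gt.edgeSet | ∀ v ∈ e, v ∈ S}.ncard ≤ 3 * S.ncard)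
    (t : ℕ) (ht : Gt.edgeSet.ncard = t)
    (htlow : 10 * n ≤ t) :
    (Gc.edgeSet.ncard : ℝ) ≥ 1 / 10 ^ 4 * ((t : ℝ) ^ 2 / (n : ℝ) ^ 2) := by
  classical
  have hncard (G : SimpleGraph (Fin n)) : G.edgeSet.ncard = #G.edgeFinset := by
    rw [← coe_edgeFinset, Set.ncard_coe_finset]
  rw [hncard] at ht ⊢
  subst ht
  refine sq_div_sq_le_of_forall_mul_le (by omega) htlow ?_ fun k => ?_
  · calc #Gt.edgeFinset ≤ n.choose 2 := by simpa using Gt.card_edgeFinset_le_card_choose_two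
      _ ≤ n ^ 2 := Nat.choose_le_pow n 2
  · simpa using card_edgeFinset_mul_le_of_isIndepSet (α := Fin k) hindep

/-- Case A of the paper, abstracted to graphs: suppose that for all smaller vertex sets the
theorem (with the analogous hypotheses) holds, that every `Gc`-independent set `S` spans at
most `3|S|` edges of `Gt`, and that `t = |E(Gt)|` satisfies `10n ≤ t ≤ 10 n^{3/2}`. Then
`|E(Gc)| ≥ 10⁻⁴ t²/n²`. -/
theorem caseA (n : ℕ) (hn : 3 ≤ n) (Gc Gt : SimpleGraph (Fin n))
    (hind : ∀ m : ℕ, m < n → ∀ Gc' Gt' : SimpleGraph (Fin m),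
      (∀ S : Set (Fin m), (S.Pairwise fun u v => ¬ Gc'.Adj u v) →
        {e ∈ Gt'.edgeSet | ∀ v ∈ e, v ∈ S}.ncard ≤ 3 * S.ncard) →
      10 * m ≤ Gt'.edgeSet.ncard →
      ((Gc'.edgeSet.ncard : ℝ) ≥
        1 / 10 ^ 5 * ((Gt'.edgeSet.ncard : ℝ) ^ 2 / (m : ℝ) ^ 2)))
    (hindep : ∀ S : Set (Fin n), (S.Pairwise fun u v => ¬ Gc.Adj u v) →
      {e ∈ Gt.edgeSet | ∀ v ∈ e, v ∈ S}.ncard ≤ 3 * S.ncard)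
    (t : ℕ) (ht : Gt.edgeSet.ncard = t)
    (htlow : 10 * n ≤ t)
    (hthigh : (t : ℝ) ≤ 10 * (n : ℝ) ^ ((3 : ℝ) / 2)) :
    (Gc.edgeSet.ncard : ℝ) ≥ 1 / 10 ^ 4 * ((t : ℝ) ^ 2 / (n : ℝ) ^ 2) :=
  caseA_general n hn Gc Gt hindep t ht htlow
end
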